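/- arXiv:2511.08440 — 3 statements merged into one kernel-verified Lean document; each statement's English description precedes it below -/
import Mathlib

section
/- Let F be a differentiable strictly convex function on an open convex set Ω ⊆ ℝ^d whose gradient map ∇F : Ω → ∇F(Ω) is a bijection. Let q_1,…,q_p ∈ Ω and λ ∈ Δ_p. Then the point p* = (∇F)⁻¹(∑_k λ_k ∇F(q_k)), if it lies in Ω, is the unique minimizer over Ω of the function p ↦ ∑_k λ_k B_F(p ‖ q_k). -/
open scoped InnerProductSpace BigOperators

noncomputable def breg {d : ℕ} (F : EuclideanSpace ℝ (Fin d) → ℝ)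
    (g : EuclideanSpace ℝ (Fin d) → EuclideanSpace ℝ (Fin d))
    (p q : EuclideanSpace ℝ (Fin d)) : ℝ :=
  F p - F q - ⟪g q, p - q⟫_ℝ

/-!
Weighting the Bregman divergences by `λ`, the terms `F(q_k)` and `⟨∇F(q_k), q_k⟩` do not depend
on `p`, and the remaining linear term is `⟨∑ λ_k ∇F(q_k), p⟩ = ⟨∇F(p*), p⟩`. Hence
`∑ λ_k B_F(p ‖ q_k) = ∑ λ_k B_F(p* ‖ q_k) + B_F(p ‖ p*)`, and `B_F(p ‖ p*) > 0` for `p ≠ p*` by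
strict convexity.
-/

section FirstOrder

variable {E : Type*} [NormedAddCommGroup E] [NormedSpace ℝ E] {s : Set E} {f : E → ℝ}
  {f' : E →L[ℝ] ℝ} {x y : E}

theorem ConvexOn.add_fderiv_le (hf : ConvexOn ℝ s f) (hx : x ∈ s) (hy : y ∈ s)
    (hf' : HasFDerivAt f f' x) : f x + f' (y - x) ≤ f y := by
  let ℓ : ℝ →ᵃ[ℝ] E := AffineMap.lineMap x y
  have hline : ConvexOn ℝ (ℓ ⁻¹' s) (f ∘ ℓ) := hf.comp_affineMap ℓ
  have h0 : (0 : ℝ) ∈ ℓ ⁻¹' s := by simpa [ℓ] using hx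
  have h1 : (1 : ℝ) ∈ ℓ ⁻¹' s := by simpa [ℓ] using hy
  have hderiv : HasDerivAt (f ∘ ℓ) (f' (y - x)) 0 := by
    have hf'0 : HasFDerivAt f f' (ℓ 0) := by simpa [ℓ] using hf'
    exact hf'0.comp_hasDerivAt 0 AffineMap.hasDerivAt_lineMap
  have hslope := hline.le_slope_of_hasDerivAt h0 h1 zero_lt_one hderiv
  simp only [slope_def_field, Function.comp_apply, ℓ, AffineMap.lineMap_apply_zero,
    AffineMap.lineMap_apply_one, sub_zero, div_one] at hslope
  linarith

/-- Strict convexity at the midpoint upgrades the first-order inequality at the midpoint to a strict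
one at `y`. -/
theorem StrictConvexOn.add_fderiv_lt (hf : StrictConvexOn ℝ s f) (hs : Convex ℝ s) (hx : x ∈ s)
    (hy : y ∈ s) (hxy : x ≠ y) (hf' : HasFDerivAt f f' x) : f x + f' (y - x) < f y := by
  set z : E := (1 / 2 : ℝ) • x + (1 / 2 : ℝ) • y
  have hz : z ∈ s := hs hx hy (by norm_num) (by norm_num) (by norm_num)
  have hzx : z - x = (1 / 2 : ℝ) • (y - x) := by simp only [z, smul_sub]; module
  have hmid : f z < (1 / 2 : ℝ) * f x + (1 / 2 : ℝ) * f y := by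
    simpa only [smul_eq_mul] using
      hf.2 hx hy hxy (by norm_num : (0 : ℝ) < 1 / 2) (by norm_num : (0 : ℝ) < 1 / 2) (by norm_num)
  have hfirst := hf.convexOn.add_fderiv_le hx hz hf'
  rw [hzx, map_smul, smul_eq_mul] at hfirst
  linarith

end FirstOrder

section Bregman

variable {d : ℕ} {F : EuclideanSpace ℝ (Fin d) → ℝ}
  {g : EuclideanSpace ℝ (Fin d) → EuclideanSpace ℝ (Fin d)}

@[simp]
theorem breg_self (p : EuclideanSpace ℝ (Fin d)) : breg F g p p = 0 := by
  simp [breg]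

theorem breg_pos {Ω : Set (EuclideanSpace ℝ (Fin d))} (hΩ : Convex ℝ Ω) (hF : StrictConvexOn ℝ Ω F)
    {p q : EuclideanSpace ℝ (Fin d)} (hp : p ∈ Ω) (hq : q ∈ Ω) (hpq : p ≠ q)
    (hg : HasGradientAt F (g q) q) : 0 < breg F g p q := by
  have h := hF.add_fderiv_lt hΩ hq hp hpq.symm hg.hasFDerivAt
  rw [InnerProductSpace.toDual_apply_apply] at h
  rw [breg]
  linarith

theorem breg_sub_breg (p c q : EuclideanSpace ℝ (Fin d)) :
    breg F g p q - breg F g c q = F p - F c - ⟪g q, p - c⟫_ℝ := by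
  have hsplit : p - q = (p - c) + (c - q) := by abel
  simp only [breg, hsplit, inner_add_right]
  ring

theorem sum_mul_breg_eq_add_breg {ι : Type*} [Fintype ι] (lam : ι → ℝ) (hsum : ∑ k, lam k = 1)
    (q : ι → EuclideanSpace ℝ (Fin d)) {c : EuclideanSpace ℝ (Fin d)}
    (hc : g c = ∑ k, lam k • g (q k)) (p : EuclideanSpace ℝ (Fin d)) :
    ∑ k, lam k * breg F g p (q k) = ∑ k, lam k * breg F g c (q k) + breg F g p c := by
  have hdiff : ∑ k, lam k * breg F g p (q k) - ∑ k, lam k * breg F g c (q k)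
      = breg F g p c := by
    calc ∑ k, lam k * breg F g p (q k) - ∑ k, lam k * breg F g c (q k)
        = ∑ k, (lam k * (F p - F c) - lam k * ⟪g (q k), p - c⟫_ℝ) := by
          rw [← Finset.sum_sub_distrib]
          refine Finset.sum_congr rfl fun k _ => ?_
          rw [← mul_sub, breg_sub_breg, mul_sub]
      _ = F p - F c - ⟪g c, p - c⟫_ℝ := by
          rw [Finset.sum_sub_distrib, ← Finset.sum_mul, hsum, one_mul, hc, sum_inner]
          simp only [real_inner_smul_left]
      _ = breg F g p c := by simp only [breg]
  linarith

end Bregman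

theorem stmt1_general {d m : ℕ} (Ω : Set (EuclideanSpace ℝ (Fin d)))
    (hΩc : Convex ℝ Ω)
    (F : EuclideanSpace ℝ (Fin d) → ℝ)
    (g : EuclideanSpace ℝ (Fin d) → EuclideanSpace ℝ (Fin d))
    (hg : ∀ x ∈ Ω, HasGradientAt F (g x) x)
    (hstrict : StrictConvexOn ℝ Ω F)
    (lam : Fin m → ℝ) (hsum : ∑ k, lam k = 1)
    (q : Fin m → EuclideanSpace ℝ (Fin d))
    (pstar : EuclideanSpace ℝ (Fin d)) (hpstar : pstar ∈ Ω)
    (hcent : g pstar = ∑ k, lam k • g (q k)) :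
    (∀ p ∈ Ω, ∑ k, lam k * breg F g pstar (q k) ≤ ∑ k, lam k * breg F g p (q k)) ∧
    (∀ p ∈ Ω,
      (∑ k, lam k * breg F g p (q k)) = (∑ k, lam k * breg F g pstar (q k)) →
      p = pstar) := by
  have hsplit := sum_mul_breg_eq_add_breg (F := F) lam hsum q hcent
  have hpos : ∀ p ∈ Ω, p ≠ pstar → 0 < breg F g p pstar := fun p hp hne =>
    breg_pos hΩc hstrict hp hpstar hne (hg pstar hpstar)
  refine ⟨fun p hp => ?_, fun p hp heq => ?_⟩
  · rw [hsplit p]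
    rcases eq_or_ne p pstar with rfl | hne
    · simp
    · linarith [hpos p hp hne]
  · by_contra hne
    rw [hsplit p] at heq
    linarith [hpos p hp hne]

/-- the right Bregman centroid `p*`, characterized by
`∇F(p*) = ∑ λ_k ∇F(q_k)`, is the unique minimizer over `Ω` of
`p ↦ ∑ λ_k B_F(p ‖ q_k)`. -/
theorem stmt1 {d m : ℕ} (Ω : Set (EuclideanSpace ℝ (Fin d)))
    (hΩo : IsOpen Ω) (hΩc : Convex ℝ Ω)
    (F : EuclideanSpace ℝ (Fin d) → ℝ)
    (g : EuclideanSpace ℝ (Fin d) → EuclideanSpace ℝ (Fin d))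
    (hg : ∀ x ∈ Ω, HasGradientAt F (g x) x)
    (hstrict : StrictConvexOn ℝ Ω F)
    (hbij : Set.InjOn g Ω)
    (lam : Fin m → ℝ) (hlam : ∀ k, 0 ≤ lam k) (hsum : ∑ k, lam k = 1)
    (q : Fin m → EuclideanSpace ℝ (Fin d)) (hq : ∀ k, q k ∈ Ω)
    (pstar : EuclideanSpace ℝ (Fin d)) (hpstar : pstar ∈ Ω)
    (hcent : g pstar = ∑ k, lam k • g (q k)) :
    (∀ p ∈ Ω, ∑ k, lam k * breg F g pstar (q k) ≤ ∑ k, lam k * breg F g p (q k)) ∧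
    (∀ p ∈ Ω,
      (∑ k, lam k * breg F g p (q k)) = (∑ k, lam k * breg F g pstar (q k)) →
      p = pstar) :=
  stmt1_general Ω hΩc F g hg hstrict lam hsum q pstar hpstar hcent
end

section
/- Let C be a nonempty closed convex subset of ℝ^n, F a Legendre function whose domain interior contains C, π₀ in the interior of dom(F), and let π̂ be the Bregman projection of π₀ onto C, i.e. the minimizer of π ↦ B_F(π ‖ π₀) over C. Then for every π* ∈ C: B_F(π* ‖ π̂) ≤ B_F(π* ‖ π₀) − B_F(π̂ ‖ π₀). In particular B_F(π* ‖ π̂) ≤ B_F(π* ‖ π₀). -/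
open scoped InnerProductSpace BigOperators

theorem IsMinOn.inner_gradient_sub_nonneg {E : Type*} [NormedAddCommGroup E]
    [InnerProductSpace ℝ E] [CompleteSpace E] {f : E → ℝ} {f' x y : E} {s : Set E}
    (hmin : IsMinOn f s x) (hf : HasGradientAt f f' x) (hs : Convex ℝ s)
    (hx : x ∈ s) (hy : y ∈ s) : 0 ≤ ⟪f', y - x⟫_ℝ := by
  have hy' : y - x ∈ posTangentConeAt s x :=
    sub_mem_posTangentConeAt_of_segment_subset (hs.segment_subset hx hy)
  simpa using (hmin.localize.hasFDerivWithinAt_nonneg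
    (hasGradientAt_iff_hasFDerivAt.mp hf).hasFDerivWithinAt hy')

section Bregman

variable {d : ℕ} {F : EuclideanSpace ℝ (Fin d) → ℝ}
  {g : EuclideanSpace ℝ (Fin d) → EuclideanSpace ℝ (Fin d)}

theorem breg_add_breg (p q r : EuclideanSpace ℝ (Fin d)) :
    breg F g p q + breg F g q r = breg F g p r - ⟪g q - g r, p - q⟫_ℝ := by
  simp only [breg, inner_sub_left, inner_sub_right]
  ring

theorem hasGradientAt_breg_left {q : EuclideanSpace ℝ (Fin d)} (hF : HasGradientAt F (g q) q)
    (r : EuclideanSpace ℝ (Fin d)) :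
    HasGradientAt (fun p => breg F g p r) (g q - g r) q := by
  have hlin : HasFDerivAt (fun p => ⟪g r, p - r⟫_ℝ) (InnerProductSpace.toDual ℝ _ (g r)) q :=
    (innerSL ℝ (g r)).hasFDerivAt.comp q ((hasFDerivAt_id q).sub_const r)
  rw [hasGradientAt_iff_hasFDerivAt, map_sub]
  exact ((hasGradientAt_iff_hasFDerivAt.mp hF).sub_const (F r)).sub hlin

end Bregman

theorem stmt5_general {d : ℕ} (C : Set (EuclideanSpace ℝ (Fin d)))
    (hCco : Convex ℝ C)
    (Ω : Set (EuclideanSpace ℝ (Fin d)))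
    (hCΩ : C ⊆ Ω)
    (F : EuclideanSpace ℝ (Fin d) → ℝ)
    (g : EuclideanSpace ℝ (Fin d) → EuclideanSpace ℝ (Fin d))
    (hg : ∀ x ∈ Ω, HasGradientAt F (g x) x)
    (π₀ : EuclideanSpace ℝ (Fin d))
    (πh : EuclideanSpace ℝ (Fin d)) (hπh : πh ∈ C)
    (hmin : ∀ π ∈ C, breg F g πh π₀ ≤ breg F g π π₀) :
    ∀ πs ∈ C, breg F g πs πh ≤ breg F g πs π₀ - breg F g πh π₀ := by
  intro πs hπs
  have hfirst_order : 0 ≤ ⟪g πh - g π₀, πs - πh⟫_ℝ :=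
    IsMinOn.inner_gradient_sub_nonneg (f := fun π => breg F g π π₀) hmin
      (hasGradientAt_breg_left (hg πh (hCΩ hπh)) π₀) hCco hπh hπs
  linarith [breg_add_breg (F := F) (g := g) πs πh π₀]

/-- generalized Pythagorean inequality for the Bregman projection
`π̂` of `π₀` onto a nonempty closed convex set `C`. -/
theorem stmt5 {d : ℕ} (C : Set (EuclideanSpace ℝ (Fin d)))
    (hCne : C.Nonempty) (hCcl : IsClosed C) (hCco : Convex ℝ C)
    (Ω : Set (EuclideanSpace ℝ (Fin d))) (hΩo : IsOpen Ω) (hΩc : Convex ℝ Ω)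
    (hCΩ : C ⊆ Ω)
    (F : EuclideanSpace ℝ (Fin d) → ℝ)
    (g : EuclideanSpace ℝ (Fin d) → EuclideanSpace ℝ (Fin d))
    (hstrict : StrictConvexOn ℝ Ω F)
    (hg : ∀ x ∈ Ω, HasGradientAt F (g x) x)
    (π₀ : EuclideanSpace ℝ (Fin d)) (hπ₀ : π₀ ∈ Ω)
    (πh : EuclideanSpace ℝ (Fin d)) (hπh : πh ∈ C)
    (hmin : ∀ π ∈ C, breg F g πh π₀ ≤ breg F g π π₀) :
    ∀ πs ∈ C, breg F g πs πh ≤ breg F g πs π₀ - breg F g πh π₀ :=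
  stmt5_general C hCco Ω hCΩ F g hg π₀ πh hπh hmin
end

section
/- Let X be a finite set with probability distribution P having full support, let Φ : X → X be an involution, and let F : ℝ^d → ℝ be differentiable, convex, and μ-strongly convex with respect to a norm ‖·‖. Let π₀ : X → ℝ^d be any map and let π̂ : X → ℝ^d satisfy π̂(x) = π̂(Φ(x)) for all x (coherence). Then E_{x∼P}[B_F(π̂(x) ‖ π₀(x))] ≥ (μ/2)·E_{x∼P}[λ(x)(1−λ(x))·‖π₀(x) − π₀(Φ(x))‖²], where λ(x) = P(x)/(P(x)+P(Φ(x))). -/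
/-!
Summing over the orbits `{x, Φ x}` of the involution, coherence makes `π̂` take a single value `r`
on each orbit. With weights `a = P x`, `b = P (Φ x)` and `λ = a / (a + b)`, the orbit contributes
`a ‖r - p‖² + b ‖r - q‖² = (a + b) (λ ‖r - p‖² + (1 - λ) ‖r - q‖²)` to the strong-convexity lower
bound, and the triangle inequality `‖p - q‖ ≤ ‖r - p‖ + ‖r - q‖` bounds this below by
`(a + b) λ (1 - λ) ‖p - q‖²`.
-/

open scoped InnerProductSpace BigOperators

open Finset

theorem Function.Involutive.sum_le_sum_of_add_comp_le {X M : Type*} [Fintype X]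
    [AddCommMonoid M] [LinearOrder M] [IsOrderedCancelAddMonoid M] {Φ : X → X}
    (hΦ : Function.Involutive Φ) {f g : X → M} (h : ∀ x, f x + f (Φ x) ≤ g x + g (Φ x)) :
    ∑ x, f x ≤ ∑ x, g x := by
  have hcomp (k : X → M) : ∑ x, k (Φ x) = ∑ x, k x :=
    Fintype.sum_equiv hΦ.toPerm _ _ fun _ => rfl
  have hdouble : ∑ x, f x + ∑ x, f x ≤ ∑ x, g x + ∑ x, g x := by
    have := sum_le_sum fun x (_ : x ∈ univ) => h x
    rwa [sum_add_distrib, sum_add_distrib, hcomp f, hcomp g] at this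
  by_contra! hlt
  exact hdouble.not_gt (add_lt_add hlt hlt)

namespace Seminorm

variable {E : Type*} [AddCommGroup E] [Module ℝ E] (N : Seminorm ℝ E)

theorem mul_one_sub_mul_sq_le {t : ℝ} (ht₀ : 0 ≤ t) (ht₁ : t ≤ 1) (p q r : E) :
    t * (1 - t) * N (p - q) ^ 2 ≤ t * N (r - p) ^ 2 + (1 - t) * N (r - q) ^ 2 := by
  have htri : N (p - q) ≤ N (r - p) + N (r - q) := by
    simpa [add_comm] using map_sub_le_add N (r - q) (r - p)
  have hsq : N (p - q) ^ 2 ≤ (N (r - p) + N (r - q)) ^ 2 :=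
    pow_le_pow_left₀ (apply_nonneg N _) htri 2
  -- `t u² + (1 - t) v² - t (1 - t) (u + v)² = (t u - (1 - t) v)²`
  nlinarith [mul_le_mul_of_nonneg_left hsq (mul_nonneg ht₀ (sub_nonneg.2 ht₁)),
    sq_nonneg (t * N (r - p) - (1 - t) * N (r - q))]

theorem weighted_pair_le {a b : ℝ} (ha : 0 < a) (hb : 0 < b) (p q r : E) :
    a * (a / (a + b) * (1 - a / (a + b)) * N (p - q) ^ 2)
        + b * (b / (b + a) * (1 - b / (b + a)) * N (q - p) ^ 2)
      ≤ a * N (r - p) ^ 2 + b * N (r - q) ^ 2 := by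
  set t := a / (a + b) with ht
  have hab : 0 < a + b := add_pos ha hb
  have hbt : b / (b + a) = 1 - t := by rw [ht, add_comm b]; field_simp; ring
  have ht₀ : 0 ≤ t := by positivity
  have ht₁ : t ≤ 1 := (div_le_one hab).2 (by linarith)
  calc a * (t * (1 - t) * N (p - q) ^ 2) + b * (b / (b + a) * (1 - b / (b + a)) * N (q - p) ^ 2)
      = (a + b) * (t * (1 - t) * N (p - q) ^ 2) := by
        rw [hbt, map_sub_rev N q p]; ring
    _ ≤ (a + b) * (t * N (r - p) ^ 2 + (1 - t) * N (r - q) ^ 2) :=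
        mul_le_mul_of_nonneg_left (N.mul_one_sub_mul_sq_le ht₀ ht₁ p q r) hab.le
    _ = a * N (r - p) ^ 2 + b * N (r - q) ^ 2 := by
        rw [ht]; field_simp; ring

end Seminorm

theorem stmt7_general {d : ℕ} {X : Type*} [Fintype X]
    (P : X → ℝ) (hP : ∀ x, 0 < P x)
    (Φ : X → X) (hΦ : ∀ x, Φ (Φ x) = x)
    (F : EuclideanSpace ℝ (Fin d) → ℝ)
    (g : EuclideanSpace ℝ (Fin d) → EuclideanSpace ℝ (Fin d))
    (N : Seminorm ℝ (EuclideanSpace ℝ (Fin d)))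
    (μ : ℝ) (hμ : 0 < μ)
    (hsc : ∀ p q, μ / 2 * (N (p - q))^2 ≤ breg F g p q)
    (π₀ πh : X → EuclideanSpace ℝ (Fin d))
    (hcoh : ∀ x, πh x = πh (Φ x)) :
    μ / 2 * ∑ x, P x * ((P x / (P x + P (Φ x))) * (1 - P x / (P x + P (Φ x)))
        * (N (π₀ x - π₀ (Φ x)))^2)
      ≤ ∑ x, P x * breg F g (πh x) (π₀ x) := by
  have horbit : ∑ x, P x * ((P x / (P x + P (Φ x))) * (1 - P x / (P x + P (Φ x)))
        * (N (π₀ x - π₀ (Φ x)))^2) ≤ ∑ x, P x * N (πh x - π₀ x) ^ 2 := by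
    refine Function.Involutive.sum_le_sum_of_add_comp_le hΦ fun x => ?_
    simp only [hΦ x, ← hcoh x]
    exact N.weighted_pair_le (hP x) (hP (Φ x)) _ _ _
  calc _ ≤ μ / 2 * ∑ x, P x * N (πh x - π₀ x) ^ 2 := by gcongr
    _ = ∑ x, P x * (μ / 2 * N (πh x - π₀ x) ^ 2) := by
        rw [mul_sum]; exact sum_congr rfl fun x _ => by ring
    _ ≤ ∑ x, P x * breg F g (πh x) (π₀ x) :=
        sum_le_sum fun x _ => mul_le_mul_of_nonneg_left (hsc _ _) (hP x).le

/-- for a coherent `π̂` and a `μ`-strongly convex generator `F`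
(with respect to a (semi)norm `N`), the expected divergence to the baseline is
lower-bounded by the baseline's incoherence. -/
theorem stmt7 {d : ℕ} {X : Type*} [Fintype X]
    (P : X → ℝ) (hP : ∀ x, 0 < P x) (hP1 : ∑ x, P x = 1)
    (Φ : X → X) (hΦ : ∀ x, Φ (Φ x) = x)
    (F : EuclideanSpace ℝ (Fin d) → ℝ)
    (g : EuclideanSpace ℝ (Fin d) → EuclideanSpace ℝ (Fin d))
    (hg : ∀ x, HasGradientAt F (g x) x)
    (hconv : ConvexOn ℝ Set.univ F)
    (N : Seminorm ℝ (EuclideanSpace ℝ (Fin d)))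
    (μ : ℝ) (hμ : 0 < μ)
    (hsc : ∀ p q, μ / 2 * (N (p - q))^2 ≤ breg F g p q)
    (π₀ πh : X → EuclideanSpace ℝ (Fin d))
    (hcoh : ∀ x, πh x = πh (Φ x)) :
    μ / 2 * ∑ x, P x * ((P x / (P x + P (Φ x))) * (1 - P x / (P x + P (Φ x)))
        * (N (π₀ x - π₀ (Φ x)))^2)
      ≤ ∑ x, P x * breg F g (πh x) (π₀ x) :=
  stmt7_general P hP Φ hΦ F g N μ hμ hsc π₀ πh hcoh
end
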